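/- arXiv:2211.04322 — 2 statements merged into one kernel-verified Lean document; each statement's English description precedes it below -/
import Mathlib

section
/- Let X = {1, …, n} with n ≥ 5, and let 𝒮* be the split system on X consisting of all trivial splits together with all 2-splits xy|X−{x,y} with x, y ∈ X−{1}. Then 𝒮* is injective. -/
/-!
If `Y ≠ Y'` are 3-sets, one of them, say `Y`, contains an element `a ∉ Y'` other than the
root `1` (the sets `Y \ Y'` and `Y' \ Y` are disjoint and nonempty). Completing `a` to a pair
`{a, b} ⊆ Y` with `b ≠ 1`, the 2-split `ab | X − {a, b}` has two points of `Y` on one side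
and all points of `Y'` except possibly `b` on the other.
-/

namespace InjectiveSplitSystems

open Finset

variable {α : Type*} [DecidableEq α]

/-- A split of `X`: an unordered bipartition of `X` into two nonempty disjoint parts,
represented as the two-element set `{A, B}` of its parts. -/
def IsSplit (X : Finset α) (S : Finset (Finset α)) : Prop :=
  ∃ A B : Finset α, S = {A, B} ∧ A ∪ B = X ∧ A ∩ B = ∅ ∧ A ≠ ∅ ∧ B ≠ ∅

/-- `S` is an `r`-split of `X`: a split of `X` whose minimum part size is `r`. -/
def IsRSplit (X : Finset α) (r : ℕ) (S : Finset (Finset α)) : Prop :=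
  IsSplit X S ∧ (∃ A ∈ S, A.card = r) ∧ ∀ A ∈ S, r ≤ A.card

/-- A split system on `X`: a set of splits of `X` containing all trivial splits
`{x} | X \ {x}`, `x ∈ X`. -/
def IsSplitSystem (X : Finset α) (𝒮 : Finset (Finset (Finset α))) : Prop :=
  (∀ S ∈ 𝒮, IsSplit X S) ∧ ∀ x ∈ X, ({{x}, X \ {x}} : Finset (Finset α)) ∈ 𝒮

/-- `phiNe Y Y' S` says `φ_Y(S) ≠ φ_{Y'}(S)`: the part of `S` containing at least two
elements of the 3-set `Y` differs from the part of `S` containing at least two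
elements of the 3-set `Y'`. -/
def phiNe (Y Y' : Finset α) (S : Finset (Finset α)) : Prop :=
  ∃ t ∈ S, ∃ t' ∈ S, t ≠ t' ∧ 2 ≤ (Y ∩ t).card ∧ 2 ≤ (Y' ∩ t').card

/-- A split system on `X` is injective if for all distinct 3-subsets `Y`, `Y'` of `X`
there is a split `S ∈ 𝒮` with `φ_Y(S) ≠ φ_{Y'}(S)`. -/
def IsInjective (X : Finset α) (𝒮 : Finset (Finset (Finset α))) : Prop :=
  ∀ Y Y' : Finset α, Y ⊆ X → Y' ⊆ X → Y.card = 3 → Y'.card = 3 → Y ≠ Y' →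
    ∃ S ∈ 𝒮, phiNe Y Y' S

/-- The restriction `S|_Y` of a split to `Y`, as the set of restricted parts. -/
def restrictSplit (S : Finset (Finset α)) (Y : Finset α) : Finset (Finset α) :=
  S.image (· ∩ Y)

open scoped Classical in
/-- The restriction `𝒮|_Y` of a split system to `Y`: all splits
`(A ∩ Y) | (B ∩ Y)` with `A|B ∈ 𝒮` and both intersections nonempty. -/
noncomputable def restrictSS (𝒮 : Finset (Finset (Finset α))) (Y : Finset α) :
    Finset (Finset (Finset α)) :=
  (𝒮.image fun S => restrictSplit S Y).filter fun T => ∀ t ∈ T, t ≠ ∅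

/-- `𝒮` 4-dices `X`. -/
def FourDices (X : Finset α) (𝒮 : Finset (Finset (Finset α))) : Prop :=
  X.card < 4 ∨ ∀ Y ⊆ X, Y.card = 4 →
    ∃ 𝒯 ⊆ restrictSS 𝒮 Y, 2 ≤ 𝒯.card ∧ ∀ S ∈ 𝒯, IsRSplit Y 2 S

/-- `𝒮` 5-dices `X`. -/
def FiveDices (X : Finset α) (𝒮 : Finset (Finset (Finset α))) : Prop :=
  X.card < 5 ∨ ∀ Y ⊆ X, Y.card = 5 →
    ∃ 𝒯 ⊆ restrictSS 𝒮 Y, 5 ≤ 𝒯.card ∧ ∀ S ∈ 𝒯, IsRSplit Y 2 S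

/-- `𝒮` 6-dices `X`: every 6-subset restriction contains a 3-split or a triangle
of 2-splits. -/
def SixDices (X : Finset α) (𝒮 : Finset (Finset (Finset α))) : Prop :=
  X.card < 6 ∨ ∀ Y ⊆ X, Y.card = 6 →
    (∃ S ∈ restrictSS 𝒮 Y, IsRSplit Y 3 S) ∨
    (∃ x ∈ Y, ∃ y ∈ Y, ∃ z ∈ Y, x ≠ y ∧ x ≠ z ∧ y ≠ z ∧
      ({{x, y}, Y \ {x, y}} : Finset (Finset α)) ∈ restrictSS 𝒮 Y ∧
      ({{x, z}, Y \ {x, z}} : Finset (Finset α)) ∈ restrictSS 𝒮 Y ∧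
      ({{y, z}, Y \ {y, z}} : Finset (Finset α)) ∈ restrictSS 𝒮 Y)

/-- Two splits are incompatible if they are distinct and all four pairwise
intersections of their parts are nonempty. -/
def Incompatible (S T : Finset (Finset α)) : Prop :=
  S ≠ T ∧ ∀ A ∈ S, ∀ B ∈ T, A ∩ B ≠ ∅

open scoped Classical in
/-- The dimension of a split system: maximum size of a pairwise incompatible subset
(which is `1` when all splits are pairwise compatible and `𝒮` is nonempty). -/
noncomputable def dimSS (𝒮 : Finset (Finset (Finset α))) : ℕ :=
  (𝒮.powerset.filter fun 𝒯 => ∀ S ∈ 𝒯, ∀ T ∈ 𝒯, S ≠ T → Incompatible S T).sup Finset.card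

/-- The injective dimension `ID(n)`: minimum dimension of an injective split system
on `{1, …, n}`. -/
noncomputable def ID (n : ℕ) : ℕ :=
  sInf {d : ℕ | ∃ 𝒮 : Finset (Finset (Finset ℕ)),
    IsSplitSystem (Finset.Icc 1 n) 𝒮 ∧ IsInjective (Finset.Icc 1 n) 𝒮 ∧ dimSS 𝒮 = d}

/-- The injective 2-split dimension `ID₂(n)`: minimum dimension of an injective split
system on `{1, …, n}` all of whose non-trivial splits have size 2. -/
noncomputable def ID2 (n : ℕ) : ℕ :=
  sInf {d : ℕ | ∃ 𝒮 : Finset (Finset (Finset ℕ)),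
    IsSplitSystem (Finset.Icc 1 n) 𝒮 ∧ IsInjective (Finset.Icc 1 n) 𝒮 ∧
    (∀ S ∈ 𝒮, IsRSplit (Finset.Icc 1 n) 1 S ∨ IsRSplit (Finset.Icc 1 n) 2 S) ∧
    dimSS 𝒮 = d}

/-- `𝒮` is rooted-injective relative to `r`. -/
def IsRootedInjective (X : Finset α) (r : α) (𝒮 : Finset (Finset (Finset α))) : Prop :=
  ∀ Z Z' : Finset α, Z ⊆ X \ {r} → Z' ⊆ X \ {r} → Z.card = 2 → Z'.card = 2 → Z ≠ Z' →
    ∃ S ∈ 𝒮, phiNe (insert r Z) (insert r Z') S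

/-- The rooted-injective dimension `ID^r(n)`: minimum dimension of a split system on an
`n`-element set that is rooted-injective relative to a given element. -/
noncomputable def IDr (n : ℕ) : ℕ :=
  sInf {d : ℕ | ∃ 𝒮 : Finset (Finset (Finset ℕ)),
    IsSplitSystem (Finset.Icc 1 n) 𝒮 ∧ IsRootedInjective (Finset.Icc 1 n) 1 𝒮 ∧
    dimSS 𝒮 = d}

/-- `𝒮` is circular: there is a labelling `x_1, …, x_n` of `X` such that every split
of `𝒮` has the form `{x_i, …, x_j} | complement`. -/
def IsCircular (X : Finset α) (𝒮 : Finset (Finset (Finset α))) : Prop :=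
  ∃ f : ℕ → α, Set.InjOn f ↑(Finset.Icc 1 X.card) ∧
    (Finset.Icc 1 X.card).image f = X ∧
    ∀ S ∈ 𝒮, ∃ i j : ℕ, 1 ≤ i ∧ i ≤ j ∧ j ≤ X.card ∧
      S = {(Finset.Icc i j).image f, X \ (Finset.Icc i j).image f}

/-- `𝒮` is maximal circular: circular and not properly contained in any circular
split system on `X`. -/
def IsMaximalCircular (X : Finset α) (𝒮 : Finset (Finset (Finset α))) : Prop :=
  IsCircular X 𝒮 ∧ ∀ 𝒮' : Finset (Finset (Finset α)),
    IsSplitSystem X 𝒮' → IsCircular X 𝒮' → 𝒮 ⊆ 𝒮' → 𝒮' = 𝒮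

/-- The degree of `x` in the graph `P(𝒮)` on vertex set `X` whose edges are the
pairs `{x, y}` with `xy | X − {x,y} ∈ 𝒮`. -/
def degP (X : Finset α) (𝒮 : Finset (Finset (Finset α))) (x : α) : ℕ :=
  ((X \ {x}).filter fun y => ({{x, y}, X \ {x, y}} : Finset (Finset α)) ∈ 𝒮).card

/-- `P(𝒮)` contains a 3-clique. -/
def HasTriangle (X : Finset α) (𝒮 : Finset (Finset (Finset α))) : Prop :=
  ∃ x ∈ X, ∃ y ∈ X, ∃ z ∈ X, x ≠ y ∧ x ≠ z ∧ y ≠ z ∧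
    ({{x, y}, X \ {x, y}} : Finset (Finset α)) ∈ 𝒮 ∧
    ({{x, z}, X \ {x, z}} : Finset (Finset α)) ∈ 𝒮 ∧
    ({{y, z}, X \ {y, z}} : Finset (Finset α)) ∈ 𝒮

/-- Conditions (B1) and (B2) for a map to be a vertex of the Buneman graph. -/
def IsBunemanVertex (𝒮 : Finset (Finset (Finset α))) (φ : {S // S ∈ 𝒮} → Finset α) : Prop :=
  (∀ S, φ S ∈ S.1) ∧ ∀ S S', S ≠ S' → (φ S ∩ φ S').Nonempty

/-- The vertex set of the Buneman graph `B(𝒮)`. -/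
abbrev BunemanVertex (𝒮 : Finset (Finset (Finset α))) : Type _ :=
  {φ : {S // S ∈ 𝒮} → Finset α // IsBunemanVertex 𝒮 φ}

/-- The Buneman graph `B(𝒮)`: two vertices are adjacent iff they differ on exactly
one split. -/
def BunemanGraph (𝒮 : Finset (Finset (Finset α))) : SimpleGraph (BunemanVertex 𝒮) where
  Adj φ ψ := ∃! S, φ.1 S ≠ ψ.1 S
  symm := by
    constructor
    rintro φ ψ ⟨S, hS, hU⟩
    exact ⟨S, hS.symm, fun T hT => hU T hT.symm⟩
  loopless := by
    constructor
    rintro φ ⟨S, hS, -⟩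
    exact hS rfl

/-- `m` is a median of `u`, `v`, `w` in the graph `G`. -/
def IsMedian {V : Type*} (G : SimpleGraph V) (u v w m : V) : Prop :=
  G.dist u m + G.dist m v = G.dist u v ∧
  G.dist v m + G.dist m w = G.dist v w ∧
  G.dist u m + G.dist m w = G.dist u w

lemma phiNe_symm {Y Y' : Finset α} {S : Finset (Finset α)} (h : phiNe Y Y' S) :
    phiNe Y' Y S := by
  obtain ⟨t, ht, t', ht', hne, h1, h2⟩ := h
  exact ⟨t', ht', t, ht, hne.symm, h2, h1⟩

lemma phiNe_pair_sdiff {X Y Y' : Finset α} {a b : α} (hab : a ≠ b) (haY : a ∈ Y)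
    (hbY : b ∈ Y) (haY' : a ∉ Y') (hY' : Y' ⊆ X) (hcard : 3 ≤ Y'.card) :
    phiNe Y Y' {{a, b}, X \ {a, b}} := by
  refine ⟨{a, b}, by simp, X \ {a, b}, by simp, ?_, ?_, ?_⟩
  · intro h
    have ha : a ∈ X \ {a, b} := h ▸ mem_insert_self a {b}
    simp at ha
  · rw [inter_eq_right.mpr (insert_subset haY (singleton_subset_iff.mpr hbY)), card_pair hab]
  · have hY'_inter : Y' ∩ (X \ {a, b}) = Y'.erase b := by
      ext x
      simp only [mem_inter, mem_sdiff, mem_insert, mem_singleton, mem_erase]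
      constructor
      · rintro ⟨hx, -, hxab⟩
        exact ⟨fun h => hxab (Or.inr h), hx⟩
      · rintro ⟨hxb, hx⟩
        exact ⟨hx, hY' hx, fun h => h.elim (fun hxa => haY' (hxa ▸ hx)) hxb⟩
    rw [hY'_inter]
    have := pred_card_le_card_erase (s := Y') (a := b)
    omega

lemma exists_mem_ne_ne {Y : Finset α} (hY : 3 ≤ Y.card) (r a : α) :
    ∃ b ∈ Y, b ≠ r ∧ b ≠ a := by
  obtain ⟨b, hb⟩ : (Y \ {r, a}).Nonempty := by
    apply sdiff_nonempty_of_card_lt_card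
    have := card_le_two (a := r) (b := a)
    omega
  simp only [mem_sdiff, mem_insert, mem_singleton, not_or] at hb
  exact ⟨b, hb.1, hb.2⟩

lemma exists_phiNe_of_mem_sdiff {X Y Y' : Finset α} {𝒮 : Finset (Finset (Finset α))} {r : α}
    (h𝒮 : ∀ a ∈ X, ∀ b ∈ X, a ≠ r → b ≠ r → a ≠ b → {{a, b}, X \ {a, b}} ∈ 𝒮)
    (hY : Y ⊆ X) (hY' : Y' ⊆ X) (hcY : 3 ≤ Y.card) (hcY' : 3 ≤ Y'.card)
    {a : α} (haY : a ∈ Y) (haY' : a ∉ Y') (har : a ≠ r) :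
    ∃ S ∈ 𝒮, phiNe Y Y' S := by
  obtain ⟨b, hbY, hbr, hba⟩ := exists_mem_ne_ne hcY r a
  exact ⟨_, h𝒮 a (hY haY) b (hY hbY) har hbr hba.symm,
    phiNe_pair_sdiff hba.symm haY hbY haY' hY' hcY'⟩

theorem isInjective_of_pair_splits_mem {X : Finset α} {𝒮 : Finset (Finset (Finset α))} (r : α)
    (h𝒮 : ∀ a ∈ X, ∀ b ∈ X, a ≠ r → b ≠ r → a ≠ b → {{a, b}, X \ {a, b}} ∈ 𝒮) :
    IsInjective X 𝒮 := by
  intro Y Y' hY hY' hcY hcY' hne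
  obtain ⟨u, hu⟩ : (Y \ Y').Nonempty :=
    sdiff_nonempty.mpr fun h => hne (eq_of_subset_of_card_le h (by omega))
  obtain ⟨v, hv⟩ : (Y' \ Y).Nonempty :=
    sdiff_nonempty.mpr fun h => hne (eq_of_subset_of_card_le h (by omega)).symm
  rw [mem_sdiff] at hu hv
  by_cases hur : u = r
  · have hvr : v ≠ r := fun h => hv.2 (h ▸ hur ▸ hu.1)
    obtain ⟨S, hS, h⟩ :=
      exists_phiNe_of_mem_sdiff h𝒮 hY' hY hcY'.ge hcY.ge hv.1 hv.2 hvr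
    exact ⟨S, hS, phiNe_symm h⟩
  · exact exists_phiNe_of_mem_sdiff h𝒮 hY hY' hcY.ge hcY'.ge hu.1 hu.2 hur

theorem statement4_general (n : ℕ) (𝒮 : Finset (Finset (Finset ℕ)))
    (h𝒮 : ∀ S : Finset (Finset ℕ), S ∈ 𝒮 ↔
      ((∃ x ∈ Finset.Icc 1 n, S = ({{x}, Finset.Icc 1 n \ {x}} : Finset (Finset ℕ))) ∨
       (∃ x ∈ Finset.Icc 1 n, ∃ y ∈ Finset.Icc 1 n, x ≠ 1 ∧ y ≠ 1 ∧ x ≠ y ∧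
         S = ({{x, y}, Finset.Icc 1 n \ {x, y}} : Finset (Finset ℕ))))) :
    IsInjective (Finset.Icc 1 n) 𝒮 :=
  isInjective_of_pair_splits_mem 1 fun a ha b hb ha1 hb1 hab =>
    (h𝒮 _).mpr (Or.inr ⟨a, ha, b, hb, ha1, hb1, hab, rfl⟩)

/-- For `X = {1, …, n}` with `n ≥ 5`, the split system consisting of
all trivial splits together with all 2-splits `xy | X − {x,y}` with `x, y ∈ X − {1}`
is injective. -/
theorem statement4 (n : ℕ) (hn : 5 ≤ n) (𝒮 : Finset (Finset (Finset ℕ)))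
    (h𝒮 : ∀ S : Finset (Finset ℕ), S ∈ 𝒮 ↔
      ((∃ x ∈ Finset.Icc 1 n, S = ({{x}, Finset.Icc 1 n \ {x}} : Finset (Finset ℕ))) ∨
       (∃ x ∈ Finset.Icc 1 n, ∃ y ∈ Finset.Icc 1 n, x ≠ 1 ∧ y ≠ 1 ∧ x ≠ y ∧
         S = ({{x, y}, Finset.Icc 1 n \ {x, y}} : Finset (Finset ℕ))))) :
    IsInjective (Finset.Icc 1 n) 𝒮 :=
  statement4_general n 𝒮 h𝒮

end InjectiveSplitSystems
end

section
/- Let S be a split of a finite set X with |X| ≥ 6, let x, y, z, p be distinct elements of X with Y = {x,y,z,p}, and let q, r ∈ X−Y be distinct. Then φ_{{x,y,z}}(S) ≠ φ_{{p,q,r}}(S) if and only if the restriction S|_{Y∪{q,r}} is a 3-split of Y∪{q,r}, or it is a 2-split of Y∪{q,r} whose part of size 2 is contained in {x,y,z} or in {p,q,r}. -/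
namespace InjectiveSplitSystems

open Finset

variable {α : Type*} [DecidableEq α]

/-! Write `S = A | B`, `Y = {x, y, z}`, `Y' = {p, q, r}`, `i = #(Y ∩ A)` and `j = #(Y' ∩ A)`.
Then `φ_Y(S) ≠ φ_{Y'}(S)` says `i ≥ 2, j ≤ 1` or `i ≤ 1, j ≥ 2`, while the restriction of `S`
to `Y ∪ Y'` has parts of sizes `i + j` and `6 - i - j`, the first lying inside `Y` or `Y'` iff
`j = 0` or `i = 0`, the second iff `j = 3` or `i = 3`. Both sides become the same condition on
`(i, j)`. -/

section Restriction

variable {A B Y Y' Z : Finset α}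

theorem card_inter_add_card_inter_of_subset_union (hAB : Disjoint A B) (hY : Y ⊆ A ∪ B) :
    #(Y ∩ A) + #(Y ∩ B) = #Y := by
  rw [← card_union_of_disjoint (hAB.mono inter_subset_right inter_subset_right),
    ← inter_union_distrib_left, inter_eq_left.mpr hY]

theorem card_inter_union_of_disjoint (hYY' : Disjoint Y Y') :
    #(A ∩ (Y ∪ Y')) = #(Y ∩ A) + #(Y' ∩ A) := by
  rw [inter_union_distrib_left, card_union_of_disjoint (hYY'.mono inter_subset_right
    inter_subset_right), inter_comm A Y, inter_comm A Y']

theorem inter_union_subset_left_iff (hYY' : Disjoint Y Y') :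
    A ∩ (Y ∪ Y') ⊆ Y ↔ Y' ∩ A = ∅ := by
  simp only [subset_iff, eq_empty_iff_forall_notMem, mem_inter, mem_union]
  exact ⟨fun h u ⟨hu', hu⟩ => disjoint_right.mp hYY' hu' (h ⟨hu, Or.inr hu'⟩),
    fun h u ⟨hu, hu'⟩ => hu'.resolve_right fun hu' => h u ⟨hu', hu⟩⟩

theorem restrictSplit_pair : restrictSplit {A, B} Z = {A ∩ Z, B ∩ Z} := by
  simp [restrictSplit, image_insert]

theorem isRSplit_pair_iff {a b : Finset α} {r : ℕ} (hunion : a ∪ b = Z) (hab : Disjoint a b)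
    (hr : 0 < r) : IsRSplit Z r {a, b} ↔ min #a #b = r := by
  simp only [IsRSplit, exists_mem_insert, forall_mem_insert, mem_singleton, exists_eq_left,
    forall_eq]
  constructor
  · rintro ⟨-, hmin, ha, hb⟩
    omega
  · intro hmin
    refine ⟨⟨a, b, rfl, hunion, disjoint_iff_inter_eq_empty.mp hab, ?_, ?_⟩, by omega, by omega,
      by omega⟩ <;> rintro rfl <;> simp only [card_empty] at hmin <;> omega

theorem phiNe_pair_iff (hAB : A ≠ B) :
    phiNe Y Y' {A, B} ↔
      2 ≤ #(Y ∩ A) ∧ 2 ≤ #(Y' ∩ B) ∨ 2 ≤ #(Y ∩ B) ∧ 2 ≤ #(Y' ∩ A) := by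
  simp [phiNe, hAB, hAB.symm]

theorem phiNe_iff_isRSplit_restrictSplit (hAB : Disjoint A B)
    (hY : Y ⊆ A ∪ B) (hY' : Y' ⊆ A ∪ B) (hYY' : Disjoint Y Y') (hY3 : #Y = 3) (hY'3 : #Y' = 3) :
    phiNe Y Y' {A, B} ↔
      (IsRSplit (Y ∪ Y') 3 (restrictSplit {A, B} (Y ∪ Y')) ∨
       (IsRSplit (Y ∪ Y') 2 (restrictSplit {A, B} (Y ∪ Y')) ∧
        ∃ t ∈ restrictSplit {A, B} (Y ∪ Y'), #t = 2 ∧ (t ⊆ Y ∨ t ⊆ Y'))) := by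
  have hne : A ≠ B := by
    rintro rfl
    rw [disjoint_self.mp hAB, bot_eq_empty, union_empty, subset_empty] at hY
    simp [hY] at hY3
  have hunion : A ∩ (Y ∪ Y') ∪ B ∩ (Y ∪ Y') = Y ∪ Y' := by
    rw [← union_inter_distrib_right, inter_eq_right.mpr (union_subset hY hY')]
  have hdisj : Disjoint (A ∩ (Y ∪ Y')) (B ∩ (Y ∪ Y')) :=
    hAB.mono inter_subset_left inter_subset_left
  have hYsplit := card_inter_add_card_inter_of_subset_union hAB hY
  have hY'split := card_inter_add_card_inter_of_subset_union hAB hY'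
  rw [restrictSplit_pair, phiNe_pair_iff hne, isRSplit_pair_iff hunion hdisj (by norm_num),
    isRSplit_pair_iff hunion hdisj (by norm_num)]
  simp only [exists_mem_insert, mem_singleton, exists_eq_left]
  rw [inter_union_subset_left_iff hYY', inter_union_subset_left_iff hYY', union_comm Y Y',
    inter_union_subset_left_iff hYY'.symm, inter_union_subset_left_iff hYY'.symm,
    card_inter_union_of_disjoint hYY'.symm, card_inter_union_of_disjoint hYY'.symm,
    ← card_eq_zero, ← card_eq_zero, ← card_eq_zero, ← card_eq_zero]
  omega

end Restriction

theorem statement7_general (X : Finset α)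
    (S : Finset (Finset α)) (hS : IsSplit X S)
    (x y z p q r : α) (hx : x ∈ X) (hy : y ∈ X) (hz : z ∈ X)
    (hp : p ∈ X) (hq : q ∈ X) (hr : r ∈ X)
    (hdist : ([x, y, z, p, q, r] : List α).Pairwise (· ≠ ·)) :
    phiNe {x, y, z} {p, q, r} S ↔
      (IsRSplit {x, y, z, p, q, r} 3 (restrictSplit S {x, y, z, p, q, r}) ∨
       (IsRSplit {x, y, z, p, q, r} 2 (restrictSplit S {x, y, z, p, q, r}) ∧
        ∃ t ∈ restrictSplit S {x, y, z, p, q, r}, t.card = 2 ∧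
          (t ⊆ ({x, y, z} : Finset α) ∨ t ⊆ ({p, q, r} : Finset α)))) := by
  obtain ⟨A, B, rfl, rfl, hAB, -, -⟩ := hS
  simp only [List.pairwise_cons, List.mem_cons, List.not_mem_nil, forall_eq_or_imp] at hdist
  obtain ⟨⟨hxy, hxz, hxp, hxq, hxr, -⟩, ⟨hyz, hyp, hyq, hyr, -⟩, ⟨hzp, hzq, hzr, -⟩,
    ⟨hpq, hpr, -⟩, ⟨hqr, -⟩, -⟩ := hdist
  have hsix : ({x, y, z, p, q, r} : Finset α) = {x, y, z} ∪ {p, q, r} := by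
    simp only [insert_union, singleton_union]
  rw [hsix]
  exact phiNe_iff_isRSplit_restrictSplit (disjoint_iff_inter_eq_empty.mpr hAB)
    (by simp [insert_subset_iff, hx, hy, hz]) (by simp [insert_subset_iff, hp, hq, hr])
    (by simp only [disjoint_insert_right, disjoint_singleton_right, mem_insert, mem_singleton,
      not_or]; grind)
    (card_eq_three.mpr ⟨x, y, z, hxy, hxz, hyz, rfl⟩)
    (card_eq_three.mpr ⟨p, q, r, hpq, hpr, hqr, rfl⟩)

/-- For a split `S` of `X` (`|X| ≥ 6`) and distinct `x,y,z,p,q,r ∈ X`: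
`φ_{xyz}(S) ≠ φ_{pqr}(S)` iff `S|_{x,y,z,p,q,r}` is a 3-split, or a 2-split whose part
of size 2 is contained in `{x,y,z}` or in `{p,q,r}`. -/
theorem statement7 (X : Finset α) (hX : 6 ≤ X.card)
    (S : Finset (Finset α)) (hS : IsSplit X S)
    (x y z p q r : α) (hx : x ∈ X) (hy : y ∈ X) (hz : z ∈ X)
    (hp : p ∈ X) (hq : q ∈ X) (hr : r ∈ X)
    (hdist : ([x, y, z, p, q, r] : List α).Pairwise (· ≠ ·)) :
    phiNe {x, y, z} {p, q, r} S ↔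
      (IsRSplit {x, y, z, p, q, r} 3 (restrictSplit S {x, y, z, p, q, r}) ∨
       (IsRSplit {x, y, z, p, q, r} 2 (restrictSplit S {x, y, z, p, q, r}) ∧
        ∃ t ∈ restrictSplit S {x, y, z, p, q, r}, t.card = 2 ∧
          (t ⊆ ({x, y, z} : Finset α) ∨ t ⊆ ({p, q, r} : Finset α)))) :=
  statement7_general X S hS x y z p q r hx hy hz hp hq hr hdist

end InjectiveSplitSystems
end
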